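/- arXiv:1707.06964 — 2 statements merged into one kernel-verified Lean document; each statement's English description precedes it below -/
import Mathlib

section
/- (Baum–Eagon inequality, linear case) Let A(p) = ∑ i, c i * p i be a linear function with coefficients c i, and suppose p lies in the scaled simplex D with p i > 0 for all i and c i + λ > 0 for all i. Define g(p)_i = ν * p i * (c i + λ) / (∑ j, p j * (c j + λ)). Then g(p) ∈ D and A(g(p)) ≥ A(p), with equality iff c is constant on the support of p. -/
/-!
Write `S = ∑ j, p j * (c j + λ)`. Since `∑ p = ν` and `S = A p + λ ν`, the `λ`-terms cancel in
`A (g p) - A p = (ν ∑ p c (c + λ) - S A p) / S`, leaving `(ν ∑ p c² - (A p)²) / S`. By Lagrange's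
identity the numerator is `½ ∑ᵢ ∑ⱼ pᵢ pⱼ (cᵢ - cⱼ)²`, a weighted variance of `c`: it is nonnegative,
and zero exactly when `c` is constant on the support of `p`.
-/

open Finset

variable {ι : Type*} [Fintype ι]

section WeightedVariance

variable (p c : ι → ℝ)

theorem two_mul_sum_mul_sum_mul_sq_sub_sq :
    2 * ((∑ i, p i) * (∑ i, p i * c i ^ 2) - (∑ i, c i * p i) ^ 2) =
      ∑ i, ∑ j, p i * p j * (c i - c j) ^ 2 := by
  have expand : ∀ i j, p i * p j * (c i - c j) ^ 2 =
      p j * (p i * c i ^ 2) + p i * (p j * c j ^ 2) - 2 * (c i * p i * (c j * p j)) := by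
    intro i j; ring
  simp only [expand, sum_sub_distrib, sum_add_distrib, ← mul_sum, ← sum_mul]
  rw [sq (∑ i, c i * p i), sum_mul_sum, sum_comm (f := fun i j => p i * (p j * c j ^ 2))]
  simp only [← mul_sum, ← sum_mul]
  ring

variable {p}

theorem sq_sum_mul_le_sum_mul_sum_mul_sq (hp : ∀ i, 0 ≤ p i) :
    (∑ i, c i * p i) ^ 2 ≤ (∑ i, p i) * ∑ i, p i * c i ^ 2 :=
  sum_sq_le_sum_mul_sum_of_sq_le_mul _ (fun i _ => hp i)
    (fun i _ => mul_nonneg (hp i) (sq_nonneg _))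
    fun i _ => (by ring : (c i * p i) ^ 2 = p i * (p i * c i ^ 2)).le

theorem sum_mul_sum_mul_sq_eq_sq_iff (hp : ∀ i, 0 ≤ p i) :
    (∑ i, p i) * (∑ i, p i * c i ^ 2) = (∑ i, c i * p i) ^ 2 ↔
      ∀ i j, p i ≠ 0 → p j ≠ 0 → c i = c j := by
  have hterm : ∀ i j, 0 ≤ p i * p j * (c i - c j) ^ 2 :=
    fun i j => mul_nonneg (mul_nonneg (hp i) (hp j)) (sq_nonneg _)
  rw [← sub_eq_zero, ← mul_eq_zero_iff_left two_ne_zero, two_mul_sum_mul_sum_mul_sq_sub_sq,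
    sum_eq_zero_iff_of_nonneg fun i _ => sum_nonneg fun j _ => hterm i j]
  simp only [mem_univ, true_imp_iff, sum_eq_zero_iff_of_nonneg fun j _ => hterm _ j, mul_eq_zero,
    pow_eq_zero_iff two_ne_zero, sub_eq_zero, or_assoc]
  exact forall₂_congr fun i j => by tauto

end WeightedVariance

section GrowthTransform

noncomputable def growthTransform (ν lam : ℝ) (c p : ι → ℝ) (i : ι) : ℝ :=
  ν * p i * (c i + lam) / ∑ j, p j * (c j + lam)

variable {ν lam : ℝ} {c p : ι → ℝ}

theorem growthTransform_nonneg (hν : 0 ≤ ν) (hc : ∀ i, 0 ≤ c i + lam) (hp : ∀ i, 0 ≤ p i)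
    (i : ι) : 0 ≤ growthTransform ν lam c p i :=
  div_nonneg (mul_nonneg (mul_nonneg hν (hp i)) (hc i))
    (sum_nonneg fun j _ => mul_nonneg (hp j) (hc j))

theorem sum_growthTransform (hS : ∑ j, p j * (c j + lam) ≠ 0) :
    ∑ i, growthTransform ν lam c p i = ν := by
  simp only [growthTransform, ← sum_div, mul_assoc, ← mul_sum]
  exact mul_div_cancel_right₀ ν hS

theorem sum_mul_growthTransform_sub (hsum : ∑ i, p i = ν) (hS : ∑ j, p j * (c j + lam) ≠ 0) :
    ∑ i, c i * growthTransform ν lam c p i - ∑ i, c i * p i =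
      ((∑ i, p i) * (∑ i, p i * c i ^ 2) - (∑ i, c i * p i) ^ 2) / ∑ j, p j * (c j + lam) := by
  have hS' : ∑ j, p j * (c j + lam) = ∑ i, c i * p i + lam * ν := by
    rw [← hsum, mul_sum, ← sum_add_distrib]
    exact sum_congr rfl fun i _ => by ring
  have hnum : ∑ i, c i * (ν * p i * (c i + lam)) =
      ν * (∑ i, p i * c i ^ 2 + lam * ∑ i, c i * p i) := by
    rw [mul_sum, ← sum_add_distrib, mul_sum]
    exact sum_congr rfl fun i _ => by ring
  rw [eq_div_iff hS, sub_mul]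
  simp only [growthTransform, mul_div_assoc', ← sum_div, div_mul_cancel₀ _ hS, hnum]
  rw [hS', hsum]
  ring

end GrowthTransform

/-- Baum–Eagon inequality, linear case: for `A p = ∑ i, c i * p i`,
`p` in the scaled simplex with all `p i > 0`, and `c i + λ > 0`, the growth transform
`g i = ν * p i * (c i + λ) / ∑ j, p j * (c j + λ)` stays in the simplex and
`A g ≥ A p`, with equality iff `c` is constant on the support of `p`. -/
theorem stmt3 (N : ℕ) (ν lam : ℝ) (hν : 0 < ν)
    (c : Fin N → ℝ) (hc : ∀ i, 0 < c i + lam)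
    (p : Fin N → ℝ) (hp : ∀ i, 0 < p i) (hsum : ∑ i, p i = ν)
    (g : Fin N → ℝ)
    (hg : ∀ i, g i = ν * p i * (c i + lam) / (∑ j, p j * (c j + lam))) :
    (∀ i, 0 ≤ g i) ∧ (∑ i, g i = ν) ∧
    (∑ i, c i * p i ≤ ∑ i, c i * g i) ∧
    ((∑ i, c i * g i = ∑ i, c i * p i) ↔
      ∀ i j, p i ≠ 0 → p j ≠ 0 → c i = c j) := by
  obtain rfl : g = growthTransform ν lam c p := funext hg
  have hp₀ : ∀ i, 0 ≤ p i := fun i => (hp i).le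
  have hS : 0 < ∑ j, p j * (c j + lam) :=
    sum_pos (fun i _ => mul_pos (hp i) (hc i)) (nonempty_of_sum_ne_zero (hsum ▸ hν.ne'))
  have hgain := sum_mul_growthTransform_sub hsum hS.ne'
  refine ⟨growthTransform_nonneg hν.le (fun i => (hc i).le) hp₀, sum_growthTransform hS.ne', ?_, ?_⟩
  · have := div_nonneg (sub_nonneg.2 (sq_sum_mul_le_sum_mul_sum_mul_sq c hp₀)) hS.le
    linarith
  · rw [← sub_eq_zero, hgain, div_eq_zero_iff, or_iff_left hS.ne', sub_eq_zero]
    exact sum_mul_sum_mul_sq_eq_sq_iff c hp₀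
end

section
/- Monotone improvement of the iteration: for the normalized power iteration p^{t+1}_i = ν p^t_i w_i / ∑_j p^t_j w_j with w_i = λ − q(i) > 0, the objective value H(p^t) = ∑ q(i) p^t_i is nonincreasing in t, and strictly decreasing unless p^t is supported on a level set of q. -/
/-!
One step of the iteration reweights `p` by `w = λ - q`. Writing `A = ∑ q p`, `B = ∑ q² p` and
`ν = ∑ p`, the normaliser is `∑ p w = λν - A` and the new objective is `ν (λA - B) / (λν - A)`,
so the objective drops by exactly `(νB - A²) / ∑ p w`. The numerator is the (unnormalised)
variance of `q` under the weights `p`, namely `½ ∑ᵢ ∑ⱼ pᵢ pⱼ (qᵢ - qⱼ)²`, which is positive unless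
`q` is constant on the support of `p`.
-/

open Finset

variable {ι : Type*} [Fintype ι]

theorem sum_sum_mul_mul_sub_sq (p q : ι → ℝ) :
    ∑ i, ∑ j, p i * p j * (q i - q j) ^ 2 =
      2 * ((∑ i, p i) * ∑ i, q i ^ 2 * p i - (∑ i, q i * p i) ^ 2) := by
  have hexpand : ∀ i j, p i * p j * (q i - q j) ^ 2 =
      q i ^ 2 * p i * p j + p i * (q j ^ 2 * p j) - 2 * (q i * p i * (q j * p j)) :=
    fun i j => by ring
  simp only [hexpand, sum_add_distrib, sum_sub_distrib, ← mul_sum, ← sum_mul]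
  ring

theorem sq_sum_mul_le_sum_mul_sum_sq_mul {p : ι → ℝ} (hp : ∀ i, 0 ≤ p i) (q : ι → ℝ) :
    (∑ i, q i * p i) ^ 2 ≤ (∑ i, p i) * ∑ i, q i ^ 2 * p i :=
  sum_sq_le_sum_mul_sum_of_sq_le_mul _ (fun i _ => hp i)
    (fun i _ => mul_nonneg (sq_nonneg _) (hp i)) fun i _ => le_of_eq (by ring)

theorem sq_sum_mul_lt_sum_mul_sum_sq_mul {p q : ι → ℝ} (hp : ∀ i, 0 ≤ p i) {i j : ι}
    (hi : p i ≠ 0) (hj : p j ≠ 0) (hq : q i ≠ q j) :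
    (∑ i, q i * p i) ^ 2 < (∑ i, p i) * ∑ i, q i ^ 2 * p i := by
  have hterm : ∀ k l, 0 ≤ p k * p l * (q k - q l) ^ 2 := fun k l =>
    mul_nonneg (mul_nonneg (hp k) (hp l)) (sq_nonneg _)
  have hpos : 0 < ∑ k, ∑ l, p k * p l * (q k - q l) ^ 2 :=
    sum_pos' (fun k _ => sum_nonneg fun l _ => hterm k l)
      ⟨i, mem_univ i, sum_pos' (fun l _ => hterm i l) ⟨j, mem_univ j,
        mul_pos (mul_pos ((hp i).lt_of_ne' hi) ((hp j).lt_of_ne' hj))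
          (pow_two_pos_of_ne_zero (sub_ne_zero.2 hq))⟩⟩
  rw [sum_sum_mul_mul_sub_sq] at hpos
  linarith

noncomputable def powerStep (ν : ℝ) (w p : ι → ℝ) (i : ι) : ℝ :=
  ν * p i * w i / ∑ j, p j * w j

theorem powerStep_pos {ν : ℝ} {w p : ι → ℝ} (hν : 0 < ν) (hw : ∀ i, 0 < w i)
    (hp : ∀ i, 0 < p i) (i : ι) : 0 < powerStep ν w p i :=
  div_pos (mul_pos (mul_pos hν (hp i)) (hw i))
    (sum_pos (fun j _ => mul_pos (hp j) (hw j)) ⟨i, mem_univ i⟩)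

theorem sum_powerStep (ν : ℝ) {w p : ι → ℝ} (hS : ∑ j, p j * w j ≠ 0) :
    ∑ i, powerStep ν w p i = ν := by
  simp only [powerStep, ← sum_div, mul_assoc, ← mul_sum]
  exact mul_div_cancel_right₀ ν hS

theorem sum_mul_sub_sum_mul_powerStep {ν lam : ℝ} {q w p : ι → ℝ}
    (hw : ∀ i, w i = lam - q i) (hp : ∑ i, p i = ν) (hS : ∑ j, p j * w j ≠ 0) :
    ∑ i, q i * p i - ∑ i, q i * powerStep ν w p i =
      (ν * ∑ i, q i ^ 2 * p i - (∑ i, q i * p i) ^ 2) / ∑ j, p j * w j := by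
  have hnorm : ∑ j, p j * w j = lam * ν - ∑ i, q i * p i := by
    simp only [hw, mul_sub, sum_sub_distrib, ← hp, mul_sum, mul_comm]
  have hnum : ∑ i, q i * powerStep ν w p i =
      ν * (lam * ∑ i, q i * p i - ∑ i, q i ^ 2 * p i) / ∑ j, p j * w j := by
    simp only [powerStep, mul_div_assoc', ← sum_div, mul_sum, ← sum_sub_distrib, hw]
    congr 1
    exact sum_congr rfl fun i _ => by ring
  rw [hnum, eq_div_iff hS, sub_mul, div_mul_cancel₀ _ hS, hnorm]
  ring

/-- Monotone improvement of the iteration: for the normalized power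
iteration `p (t+1) i = ν * p t i * w i / ∑ j, p t j * w j` with `w i = λ - q i > 0`,
the objective `H (p t) = ∑ i, q i * p t i` is nonincreasing in `t`, and strictly
decreasing unless `p t` is supported on a level set of `q`. -/
theorem stmt16 (N : ℕ) (ν lam : ℝ) (hν : 0 < ν)
    (q : Fin N → ℝ) (hlam : ∀ i, q i < lam)
    (w : Fin N → ℝ) (hw : ∀ i, w i = lam - q i)
    (p : ℕ → Fin N → ℝ)
    (hpos : ∀ i, 0 < p 0 i) (hsum : ∑ i, p 0 i = ν)
    (hrec : ∀ t i, p (t + 1) i = ν * p t i * w i / (∑ j, p t j * w j)) :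
    ∀ t, (∑ i, q i * p (t + 1) i ≤ ∑ i, q i * p t i) ∧
      (∑ i, q i * p (t + 1) i < ∑ i, q i * p t i ∨
        ∀ i j, p t i ≠ 0 → p t j ≠ 0 → q i = q j) := by
  have hw_pos : ∀ i, 0 < w i := fun i => hw i ▸ sub_pos.2 (hlam i)
  have hne : (univ : Finset (Fin N)).Nonempty := nonempty_of_sum_ne_zero (hsum ▸ hν.ne')
  have hstep : ∀ t, p (t + 1) = powerStep ν w (p t) := fun t => funext (hrec t)
  have hS : ∀ t, (∀ i, 0 < p t i) → 0 < ∑ j, p t j * w j := fun t hp =>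
    sum_pos (fun j _ => mul_pos (hp j) (hw_pos j)) hne
  have hinv : ∀ t, (∀ i, 0 < p t i) ∧ ∑ i, p t i = ν := by
    intro t
    induction t with
    | zero => exact ⟨hpos, hsum⟩
    | succ t ih =>
      rw [hstep]
      exact ⟨powerStep_pos hν hw_pos ih.1, sum_powerStep ν (hS t ih.1).ne'⟩
  intro t
  obtain ⟨hp, hpν⟩ := hinv t
  have hdrop := hstep t ▸ sum_mul_sub_sum_mul_powerStep hw hpν (hS t hp).ne'
  have hp' : ∀ i, 0 ≤ p t i := fun i => (hp i).le
  refine ⟨?_, or_iff_not_imp_right.2 fun hconst => ?_⟩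
  · have := div_nonneg (sub_nonneg.2 (hpν ▸ sq_sum_mul_le_sum_mul_sum_sq_mul hp' q)) (hS t hp).le
    linarith
  · push Not at hconst
    obtain ⟨i, j, hi, hj, hq⟩ := hconst
    have := div_pos (sub_pos.2 (hpν ▸ sq_sum_mul_lt_sum_mul_sum_sq_mul hp' hi hj hq)) (hS t hp)
    linarith
end
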